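/- arXiv:math/0301270 — 4 statements merged into one kernel-verified Lean document; each statement's English description precedes it below -/
import Mathlib

section
/- For every interval I ⊆ [0,1], the number of Farey fractions of order Q lying in I equals Q²|I|/(2ζ(2)) + O(Q log Q) as Q → ∞. -/
/-!
Without coprimality, the pairs `(a, q)` with `1 ≤ a ≤ q ≤ M` and `a / q ∈ [x, y]` are counted
denominator by denominator: each `q` contributes `(y - x) q + O(1)` numerators, so there are
`N(M) = (y - x) M² / 2 + O(M)` of them. Grouping pairs by `d = gcd(a, q)` and inverting with the
Möbius function, the Farey count is `∑_{d ≤ Q} μ(d) N(⌊Q / d⌋)`. The errors `O(Q / d)` add up to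
`O(Q log Q)`, and the main terms to `(y - x) Q² / 2 · ∑_{d ≤ Q} μ(d) / d²`, which differs from
`(y - x) Q² / (2 ζ(2))` by `O(Q)` because `∑ μ(d) / d² = 1 / ζ(2)` has tail `O(1 / Q)`.
-/

open Finset Real
open scoped ArithmeticFunction.Moebius

lemma abs_card_Icc_ceil_floor_sub_le {a b : ℝ} (ha : 0 ≤ a) (hb : 0 ≤ b) (hab : a ≤ b + 1) :
    |(#(Icc ⌈a⌉₊ ⌊b⌋₊) : ℝ) - (b - a)| ≤ 1 := by
  have hb₁ := Nat.floor_le hb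
  have hb₂ := Nat.lt_floor_add_one b
  have ha₁ := Nat.le_ceil a
  have ha₂ := Nat.ceil_lt_add_one ha
  rw [Nat.card_Icc, abs_le]
  rcases le_or_gt ⌈a⌉₊ (⌊b⌋₊ + 1) with h | h
  · rw [Nat.cast_sub h]
    push_cast
    constructor <;> linarith
  · have h' : (⌊b⌋₊ : ℝ) + 1 + 1 ≤ ⌈a⌉₊ := by exact_mod_cast h
    rw [Nat.sub_eq_zero_of_le h.le]
    constructor <;> push_cast <;> linarith

noncomputable def fractionNumerators (x y : ℝ) (m : ℕ) : Finset ℕ :=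
  {b ∈ Icc 1 m | (b : ℝ) / m ∈ Set.Icc x y}

lemma abs_card_fractionNumerators_sub_le {x y : ℝ} (hx : 0 ≤ x) (hxy : x ≤ y) (hy : y ≤ 1)
    {m : ℕ} (hm : 0 < m) :
    |(#(fractionNumerators x y m) : ℝ) - (y - x) * m| ≤ 2 := by
  have hm' : (0 : ℝ) < m := by exact_mod_cast hm
  have hym : 0 ≤ y * m := mul_nonneg (hx.trans hxy) hm'.le
  have hset : fractionNumerators x y m = Icc ⌈max 1 (x * m)⌉₊ ⌊y * m⌋₊ := by
    ext b
    simp only [fractionNumerators, mem_filter, mem_Icc, Set.mem_Icc, Nat.ceil_le,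
      Nat.le_floor_iff hym, max_le_iff, le_div_iff₀ hm', div_le_iff₀ hm', Nat.one_le_cast]
    constructor
    · rintro ⟨⟨hb, -⟩, hxb, hby⟩
      exact ⟨⟨hb, hxb⟩, hby⟩
    · rintro ⟨⟨hb, hxb⟩, hby⟩
      have : (b : ℝ) ≤ m := hby.trans (by nlinarith)
      exact ⟨⟨hb, by exact_mod_cast this⟩, hxb, hby⟩
  have hcount := abs_card_Icc_ceil_floor_sub_le (a := max 1 (x * m))
    (le_max_of_le_left zero_le_one) hym (max_le (by nlinarith) (by nlinarith))
  have hmax : max 1 (x * m) ≤ x * m + 1 := max_le (by nlinarith) (by linarith)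
  have hmax' : x * m ≤ max 1 (x * m) := le_max_right _ _
  rw [hset, abs_le]
  rw [abs_le] at hcount
  constructor <;> linarith

noncomputable def fractionPairs (x y : ℝ) (M : ℕ) : Finset (ℕ × ℕ) :=
  {p ∈ Icc 1 M ×ˢ Icc 1 M | p.1 ≤ p.2 ∧ (p.1 : ℝ) / p.2 ∈ Set.Icc x y}

lemma card_fractionPairs_eq_sum (x y : ℝ) (M : ℕ) :
    #(fractionPairs x y M) = ∑ m ∈ Icc 1 M, #(fractionNumerators x y m) := by
  rw [card_eq_sum_card_fiberwise (f := Prod.snd) (t := Icc 1 M) fun p hp => by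
    simp only [fractionPairs, coe_filter, Set.mem_ofPred_eq, mem_product] at hp
    exact hp.1.2]
  refine sum_congr rfl fun m hm => ?_
  have hm1 := (mem_Icc.1 hm).1
  have hmM := (mem_Icc.1 hm).2
  refine card_nbij' Prod.fst (fun b => (b, m)) ?_ ?_ ?_ fun _ _ => rfl
  · rintro ⟨b, m'⟩ hp
    simp only [fractionPairs, coe_filter, Set.mem_ofPred_eq, mem_filter, mem_product,
      mem_Icc] at hp
    obtain ⟨⟨⟨⟨hb, -⟩, -⟩, hbm, hbxy⟩, rfl⟩ := hp
    simpa [fractionNumerators] using ⟨⟨hb, hbm⟩, hbxy⟩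
  · intro b hb
    simp only [fractionNumerators, coe_filter, Set.mem_ofPred_eq, mem_Icc] at hb
    obtain ⟨⟨hb, hbm⟩, hbxy⟩ := hb
    simp only [fractionPairs, coe_filter, Set.mem_ofPred_eq, mem_filter, mem_product, mem_Icc,
      and_true]
    exact ⟨⟨⟨hb, hbm.trans hmM⟩, hm1, hmM⟩, hbm, hbxy⟩
  · rintro ⟨b, m'⟩ hp
    simp only [coe_filter, Set.mem_ofPred_eq] at hp
    rw [hp.2]

lemma sum_Icc_natCast_eq (M : ℕ) : ∑ m ∈ Icc 1 M, (m : ℝ) = M * (M + 1) / 2 := by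
  induction M with
  | zero => simp
  | succ n ih =>
    rw [sum_Icc_succ_top (by omega), ih]
    push_cast
    ring

lemma abs_card_fractionPairs_sub_le {x y : ℝ} (hx : 0 ≤ x) (hxy : x ≤ y) (hy : y ≤ 1) (M : ℕ) :
    |(#(fractionPairs x y M) : ℝ) - (y - x) * M ^ 2 / 2| ≤ 3 * (M : ℝ) := by
  have herr : |(#(fractionPairs x y M) : ℝ) - (y - x) * (M * (M + 1) / 2)| ≤ 2 * (M : ℝ) := by
    rw [card_fractionPairs_eq_sum, ← sum_Icc_natCast_eq, mul_sum]
    push_cast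
    rw [← sum_sub_distrib]
    calc _ ≤ ∑ m ∈ Icc 1 M, |(#(fractionNumerators x y m) : ℝ) - (y - x) * m| :=
          abs_sum_le_sum_abs _ _
      _ ≤ ∑ m ∈ Icc 1 M, (2 : ℝ) :=
          sum_le_sum fun m hm => abs_card_fractionNumerators_sub_le hx hxy hy (mem_Icc.1 hm).1
      _ = 2 * M := by simp [mul_comm]
  have hM : (0 : ℝ) ≤ M := M.cast_nonneg
  rw [abs_le] at herr ⊢
  constructor <;> nlinarith

lemma abs_card_fractionPairs_floor_sub_le {x y : ℝ} (hx : 0 ≤ x) (hxy : x ≤ y) (hy : y ≤ 1)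
    {t : ℝ} (ht : 0 ≤ t) :
    |(#(fractionPairs x y ⌊t⌋₊) : ℝ) - (y - x) / 2 * t ^ 2| ≤ 4 * t := by
  have h := abs_card_fractionPairs_sub_le hx hxy hy ⌊t⌋₊
  have h₁ := Nat.floor_le ht
  have h₂ := Nat.lt_floor_add_one t
  have hM : (0 : ℝ) ≤ ⌊t⌋₊ := Nat.cast_nonneg _
  have hsq : (y - x) / 2 * (t ^ 2 - ⌊t⌋₊ ^ 2) ≤ t := by
    have : t ^ 2 - ⌊t⌋₊ ^ 2 ≤ 2 * t := by nlinarith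
    nlinarith
  have hsq' : 0 ≤ (y - x) / 2 * (t ^ 2 - ⌊t⌋₊ ^ 2) := by
    apply mul_nonneg (by linarith); nlinarith
  rw [abs_le] at h ⊢
  constructor <;> nlinarith

lemma sum_divisors_moebius (n : ℕ) :
    ∑ d ∈ n.divisors, (μ d : ℤ) = if n = 1 then 1 else 0 := by
  have h := congrArg (· n) ArithmeticFunction.moebius_mul_coe_zeta
  rwa [ArithmeticFunction.coe_mul_zeta_apply, ArithmeticFunction.one_apply] at h

section ScaleInvariant

variable {P : ℕ × ℕ → Prop} [DecidablePred P]

lemma card_filter_dvd_eq_card_filter_div (hP : ∀ d p, 0 < d → (P (d • p) ↔ P p)) (Q : ℕ) {d : ℕ}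
    (hd : 0 < d) :
    #{p ∈ Icc 1 Q ×ˢ Icc 1 Q | P p ∧ d ∣ p.1 ∧ d ∣ p.2} =
      #{p ∈ Icc 1 (Q / d) ×ˢ Icc 1 (Q / d) | P p} := by
  symm
  refine card_nbij' (d • ·) (fun p => (p.1 / d, p.2 / d)) ?_ ?_ ?_ ?_
  · rintro ⟨a, q⟩ hp
    simp only [coe_filter, Set.mem_ofPred_eq, mem_product, mem_Icc,
      Nat.le_div_iff_mul_le hd] at hp
    simp only [coe_filter, Set.mem_ofPred_eq, mem_product, mem_Icc, Prod.smul_mk,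
      smul_eq_mul, dvd_mul_right, and_true]
    obtain ⟨⟨⟨ha, haQ⟩, hq, hqQ⟩, hPaq⟩ := hp
    exact ⟨⟨⟨Nat.mul_pos hd ha, by rwa [mul_comm]⟩, Nat.mul_pos hd hq, by rwa [mul_comm]⟩,
      (hP d (a, q) hd).2 hPaq⟩
  · rintro ⟨a, q⟩ hp
    simp only [coe_filter, Set.mem_ofPred_eq, mem_product, mem_Icc] at hp
    obtain ⟨hbox, hPaq, ⟨a, rfl⟩, ⟨q, rfl⟩⟩ := hp
    simp only [coe_filter, Set.mem_ofPred_eq, mem_product, mem_Icc, Nat.mul_div_cancel_left _ hd,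
      Nat.le_div_iff_mul_le hd]
    obtain ⟨⟨ha, haQ⟩, hq, hqQ⟩ := hbox
    exact ⟨⟨⟨Nat.pos_of_mul_pos_left ha, by rwa [mul_comm]⟩, Nat.pos_of_mul_pos_left hq,
      by rwa [mul_comm]⟩, (hP d (a, q) hd).1 hPaq⟩
  · rintro ⟨a, q⟩ -
    simp [Nat.mul_div_cancel_left _ hd]
  · rintro ⟨a, q⟩ hp
    simp only [coe_filter, Set.mem_ofPred_eq] at hp
    simp [Nat.mul_div_cancel' hp.2.2.1, Nat.mul_div_cancel' hp.2.2.2]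

lemma card_filter_coprime_eq_sum_moebius (hP : ∀ d p, 0 < d → (P (d • p) ↔ P p)) (Q : ℕ) :
    (#{p ∈ Icc 1 Q ×ˢ Icc 1 Q | P p ∧ p.1.Coprime p.2} : ℤ) =
      ∑ d ∈ Icc 1 Q, μ d * #{p ∈ Icc 1 (Q / d) ×ˢ Icc 1 (Q / d) | P p} := by
  set s := {p ∈ Icc 1 Q ×ˢ Icc 1 Q | P p}
  calc (#{p ∈ Icc 1 Q ×ˢ Icc 1 Q | P p ∧ p.1.Coprime p.2} : ℤ)
      = ∑ p ∈ s, ∑ d ∈ (p.1.gcd p.2).divisors, (μ d : ℤ) := by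
        simp only [sum_divisors_moebius, ← Nat.coprime_iff_gcd_eq_one, sum_boole, s,
          filter_filter]
    _ = ∑ d ∈ Icc 1 Q, ∑ p ∈ s with d ∣ p.1 ∧ d ∣ p.2, (μ d : ℤ) := by
        refine sum_comm' fun p d => ?_
        simp only [s, mem_filter, mem_product, mem_Icc, Nat.mem_divisors, Nat.dvd_gcd_iff]
        constructor
        · rintro ⟨hp, hdvd, -⟩
          have hp₁ : 0 < p.1 := hp.1.1.1
          exact ⟨⟨hp, hdvd⟩, Nat.pos_of_dvd_of_pos hdvd.1 hp₁,
            (Nat.le_of_dvd hp₁ hdvd.1).trans hp.1.1.2⟩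
        · rintro ⟨⟨hp, hdvd⟩, -⟩
          exact ⟨hp, hdvd, (Nat.gcd_pos_of_pos_left _ hp.1.1.1).ne'⟩
    _ = ∑ d ∈ Icc 1 Q, μ d * #{p ∈ Icc 1 (Q / d) ×ˢ Icc 1 (Q / d) | P p} := by
        refine sum_congr rfl fun d hd => ?_
        rw [sum_const, ← card_filter_dvd_eq_card_filter_div hP Q (mem_Icc.1 hd).1, filter_filter,
          nsmul_eq_mul, mul_comm]

end ScaleInvariant

lemma hasSum_moebius_div_sq : HasSum (fun n : ℕ => (μ n : ℝ) / n ^ 2) (6 / π ^ 2) := by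
  have hs : 1 < (2 : ℂ).re := by norm_num
  have hL : LSeries (fun n => (μ n : ℂ)) 2 = ((6 / π ^ 2 : ℝ) : ℂ) := by
    have h := ArithmeticFunction.LSeries_zeta_mul_Lseries_moebius hs
    rw [ArithmeticFunction.LSeries_zeta_eq_riemannZeta hs, riemannZeta_two] at h
    rw [eq_inv_of_mul_eq_one_right h]
    push_cast
    rw [inv_div]
  have hterm : LSeries.term (fun n => (μ n : ℂ)) 2 = fun n => (((μ n : ℝ) / n ^ 2 : ℝ) : ℂ) := by
    ext n
    rcases eq_or_ne n 0 with rfl | hn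
    · simp
    · simp [LSeries.term_of_ne_zero hn]
  rw [← Complex.hasSum_ofReal, ← hL, ← hterm]
  exact (ArithmeticFunction.LSeriesSummable_moebius_iff.2 hs).LSeriesHasSum

lemma abs_sum_range_sub_le_of_abs_le_inv_sq {f : ℕ → ℝ} {S : ℝ} (hf : HasSum f S) {Q : ℕ}
    (hQ : 0 < Q) (hb : ∀ n, Q < n → |f n| ≤ ((n : ℝ) ^ 2)⁻¹) :
    |∑ n ∈ range (Q + 1), f n - S| ≤ (Q : ℝ)⁻¹ := by
  have htail := (hasSum_nat_add_iff' (Q + 1)).2 hf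
  rw [abs_sub_comm]
  refine le_of_tendsto' htail.tendsto_sum_nat.abs fun n => ?_
  calc |∑ i ∈ range n, f (i + (Q + 1))|
      ≤ ∑ i ∈ range n, |f (i + (Q + 1))| := abs_sum_le_sum_abs _ _
    _ ≤ ∑ i ∈ range n, (((Q + 1 + i : ℕ) : ℝ) ^ 2)⁻¹ :=
        sum_le_sum fun i _ => by rw [add_comm i]; exact hb _ (by omega)
    _ = ∑ k ∈ Ioc Q (Q + n), ((k : ℝ) ^ 2)⁻¹ := by
        rw [← Ico_add_one_add_one_eq_Ioc, sum_Ico_eq_sum_range, add_right_comm,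
          Nat.add_sub_cancel_left]
    _ ≤ (Q : ℝ)⁻¹ - ((Q + n : ℕ) : ℝ)⁻¹ := sum_Ioc_inv_sq_le_sub hQ.ne' (by omega)
    _ ≤ (Q : ℝ)⁻¹ := sub_le_self _ (by positivity)

lemma abs_sum_moebius_div_sq_sub_le {Q : ℕ} (hQ : 0 < Q) :
    |∑ d ∈ Icc 1 Q, (μ d : ℝ) / d ^ 2 - 6 / π ^ 2| ≤ (Q : ℝ)⁻¹ := by
  have h := abs_sum_range_sub_le_of_abs_le_inv_sq hasSum_moebius_div_sq hQ fun n _ => by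
    rw [abs_div, abs_of_nonneg (by positivity : (0 : ℝ) ≤ (n : ℝ) ^ 2), div_eq_mul_inv]
    exact mul_le_of_le_one_left (by positivity)
      (by exact_mod_cast ArithmeticFunction.abs_moebius_le_one (n := n))
  rw [Nat.range_succ_eq_Icc_zero, ← insert_Icc_add_one_left_eq_Icc (Nat.zero_le Q),
    sum_insert (by simp)] at h
  simpa using h

lemma sum_Icc_inv_le_one_add_log (n : ℕ) : ∑ d ∈ Icc 1 n, (d : ℝ)⁻¹ ≤ 1 + log n := by
  simpa [harmonic_eq_sum_Icc] using harmonic_le_one_add_log n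

lemma abs_sum_moebius_mul_sub_le {N : ℕ → ℝ} {c K : ℝ}
    (hN : ∀ t : ℝ, 0 ≤ t → |N ⌊t⌋₊ - c * t ^ 2| ≤ K * t) {Q : ℕ} (hQ : 0 < Q) :
    |∑ d ∈ Icc 1 Q, (μ d : ℝ) * N (Q / d) - c * Q ^ 2 * (6 / π ^ 2)| ≤
      K * Q * (1 + log Q) + |c| * Q := by
  have hK : 0 ≤ K := by simpa using (abs_nonneg _).trans (hN 1 zero_le_one)
  have hsplit : ∑ d ∈ Icc 1 Q, (μ d : ℝ) * N (Q / d) - c * Q ^ 2 * (6 / π ^ 2) =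
      ∑ d ∈ Icc 1 Q, (μ d : ℝ) * (N ⌊(Q : ℝ) / d⌋₊ - c * ((Q : ℝ) / d) ^ 2) +
        c * Q ^ 2 * (∑ d ∈ Icc 1 Q, (μ d : ℝ) / d ^ 2 - 6 / π ^ 2) := by
    simp only [Nat.floor_div_eq_div, mul_sub, sum_sub_distrib, mul_sum]
    ring_nf
  have hmain : |∑ d ∈ Icc 1 Q, (μ d : ℝ) * (N ⌊(Q : ℝ) / d⌋₊ - c * ((Q : ℝ) / d) ^ 2)| ≤
      K * Q * (1 + log Q) :=
    calc _ ≤ ∑ d ∈ Icc 1 Q, |(μ d : ℝ) * (N ⌊(Q : ℝ) / d⌋₊ - c * ((Q : ℝ) / d) ^ 2)| :=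
          abs_sum_le_sum_abs _ _
      _ ≤ ∑ d ∈ Icc 1 Q, K * Q * (d : ℝ)⁻¹ := sum_le_sum fun d _ => by
          rw [abs_mul, mul_assoc, ← div_eq_mul_inv]
          exact (mul_le_of_le_one_left (abs_nonneg _)
            (mod_cast ArithmeticFunction.abs_moebius_le_one)).trans (hN _ (by positivity))
      _ = K * Q * ∑ d ∈ Icc 1 Q, (d : ℝ)⁻¹ := (mul_sum _ _ _).symm
      _ ≤ K * Q * (1 + log Q) :=
          mul_le_mul_of_nonneg_left (sum_Icc_inv_le_one_add_log Q) (by positivity)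
  have htail : |c * Q ^ 2 * (∑ d ∈ Icc 1 Q, (μ d : ℝ) / d ^ 2 - 6 / π ^ 2)| ≤ |c| * Q :=
    calc _ = |c| * Q ^ 2 * |∑ d ∈ Icc 1 Q, (μ d : ℝ) / d ^ 2 - 6 / π ^ 2| := by
          rw [abs_mul, abs_mul, abs_of_nonneg (by positivity : (0 : ℝ) ≤ Q ^ 2)]
      _ ≤ |c| * Q ^ 2 * (Q : ℝ)⁻¹ :=
          mul_le_mul_of_nonneg_left (abs_sum_moebius_div_sq_sub_le hQ) (by positivity)
      _ = |c| * Q := by field_simp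
  rw [hsplit]
  exact (abs_add_le _ _).trans (add_le_add hmain htail)

noncomputable def fareyPairs (x y : ℝ) (Q : ℕ) : Finset (ℕ × ℕ) :=
  {p ∈ Icc 1 Q ×ˢ Icc 1 Q | p.1 ≤ p.2 ∧ p.1.Coprime p.2 ∧ (p.1 : ℝ) / p.2 ∈ Set.Icc x y}

lemma card_fareyPairs_eq_sum_moebius (x y : ℝ) (Q : ℕ) :
    (#(fareyPairs x y Q) : ℝ) = ∑ d ∈ Icc 1 Q, (μ d : ℝ) * #(fractionPairs x y (Q / d)) := by
  have hfarey : fareyPairs x y Q = {p ∈ Icc 1 Q ×ˢ Icc 1 Q |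
      (p.1 ≤ p.2 ∧ (p.1 : ℝ) / p.2 ∈ Set.Icc x y) ∧ p.1.Coprime p.2} :=
    filter_congr fun _ _ => by tauto
  rw [hfarey]
  refine mod_cast card_filter_coprime_eq_sum_moebius
    (P := fun p => p.1 ≤ p.2 ∧ (p.1 : ℝ) / p.2 ∈ Set.Icc x y) (fun d ⟨a, q⟩ hd => ?_) Q
  have hd' : (d : ℝ) ≠ 0 := by exact_mod_cast hd.ne'
  simp only [Prod.smul_mk, smul_eq_mul, Nat.mul_le_mul_left_iff hd, Nat.cast_mul,
    mul_div_mul_left _ _ hd']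

/-- For every interval `I = [x,y] ⊆ [0,1]`, the number of Farey fractions of order `Q`
lying in `I` equals `Q²|I|/(2ζ(2)) + O(Q log Q)` as `Q → ∞`. -/
theorem farey_count_asymptotic :
    ∃ C > 0, ∀ x y : ℝ, 0 ≤ x → x ≤ y → y ≤ 1 → ∀ Q : ℕ, 2 ≤ Q →
      |(((Finset.Icc 1 Q ×ˢ Finset.Icc 1 Q).filter
            (fun p => p.1 ≤ p.2 ∧ Nat.Coprime p.1 p.2 ∧
              (p.1 : ℝ) / (p.2 : ℝ) ∈ Set.Icc x y)).card : ℝ)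
        - (Q : ℝ) ^ 2 * (y - x) / (2 * (Real.pi ^ 2 / 6))|
      ≤ C * Q * Real.log Q := by
  refine ⟨11, by norm_num, fun x y hx hxy hy Q hQ => ?_⟩
  change |(#(fareyPairs x y Q) : ℝ) - _| ≤ _
  have hlog : 2 / 3 < log Q := by
    have : log 2 ≤ log Q := log_le_log two_pos (by exact_mod_cast hQ)
    linarith [log_two_gt_d9]
  have hmain := abs_sum_moebius_mul_sub_le (N := fun M => (#(fractionPairs x y M) : ℝ))
    (c := (y - x) / 2) (fun t ht => abs_card_fractionPairs_floor_sub_le hx hxy hy ht)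
    (by omega : 0 < Q)
  have hconst : (Q : ℝ) ^ 2 * (y - x) / (2 * (π ^ 2 / 6)) = (y - x) / 2 * Q ^ 2 * (6 / π ^ 2) := by
    field_simp
  rw [card_fareyPairs_eq_sum_moebius, hconst]
  refine hmain.trans ?_
  have hQ' : (2 : ℝ) ≤ Q := by exact_mod_cast hQ
  rw [abs_of_nonneg (by linarith)]
  nlinarith
end

section
/- The sum over all pairs of consecutive Farey fractions of order Q, with denominators q and q', of 1/(q'²(q+q')²) is O(1/Q) as Q → ∞. -/
/-!
Consecutive Farey fractions `a/q < a'/q'` of order `Q` satisfy `q + q' > Q`, since otherwise the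
mediant `(a + a')/(q + q')` would lie strictly between them. Hence each term is at most
`1/(q'² Q²)`. A Farey fraction has only one left neighbour, so the sum is bounded by the sum of
`1/(q'² Q²)` over all `a', q' ≤ Q`, which is at most `Q · ζ(2)/Q² ≤ 2/Q`.
-/

/-- `a/q < a'/q'` are consecutive Farey fractions of order `Q`. -/
def FareyConsec (Q a q a' q' : ℕ) : Prop :=
  1 ≤ a ∧ a ≤ q ∧ q ≤ Q ∧ 1 ≤ a' ∧ a' ≤ q' ∧ q' ≤ Q ∧
    Nat.Coprime a q ∧ Nat.Coprime a' q' ∧ (a : ℚ) / q < (a' : ℚ) / q' ∧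
    ∀ b r : ℕ, 1 ≤ r → r ≤ Q →
      (a : ℚ) / q < (b : ℚ) / r → (b : ℚ) / r < (a' : ℚ) / q' → False

open scoped Classical

namespace FareyConsec

variable {Q a q a' q' : ℕ}

lemma left_den_pos (h : FareyConsec Q a q a' q') : 0 < q := h.1.trans h.2.1

lemma right_den_pos (h : FareyConsec Q a q a' q') : 0 < q' :=
  h.2.2.2.1.trans h.2.2.2.2.1

lemma lt_add (h : FareyConsec Q a q a' q') : Q < q + q' := by
  have hq₀ := h.left_den_pos
  have hq : (0 : ℚ) < q := by exact_mod_cast hq₀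
  have hq' : (0 : ℚ) < q' := by exact_mod_cast h.right_den_pos
  obtain ⟨-, -, -, -, -, -, -, -, hlt, hgap⟩ := h
  have hcross : (a : ℚ) * q' < a' * q := (div_lt_div_iff₀ hq hq').mp hlt
  by_contra! hle
  refine hgap (a + a') (q + q') (by lia) hle ?_ ?_ <;> push_cast
  · rw [div_lt_div_iff₀ hq (by positivity)]
    linarith
  · rw [div_lt_div_iff₀ (by positivity) hq']
    linarith

lemma left_unique {a₁ q₁ a₂ q₂ : ℕ}
    (h₁ : FareyConsec Q a₁ q₁ a' q') (h₂ : FareyConsec Q a₂ q₂ a' q') :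
    a₁ = a₂ ∧ q₁ = q₂ := by
  have hq₁ := h₁.left_den_pos
  have hq₂ := h₂.left_den_pos
  obtain ⟨ha₁, -, hq₁Q, -, -, -, hcop₁, -, hlt₁, hgap₁⟩ := h₁
  obtain ⟨-, -, hq₂Q, -, -, -, hcop₂, -, hlt₂, hgap₂⟩ := h₂
  have heq : (a₁ : ℚ) / q₁ = a₂ / q₂ := by
    by_contra hne
    rcases lt_or_gt_of_ne hne with hlt | hlt
    · exact hgap₁ a₂ q₂ hq₂ hq₂Q hlt hlt₂
    · exact hgap₂ a₁ q₁ hq₁ hq₁Q hlt hlt₁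
  have hcross : a₁ * q₂ = a₂ * q₁ := by
    rw [div_eq_div_iff (by positivity) (by positivity)] at heq
    exact_mod_cast heq
  have ha : a₁ = a₂ := Nat.dvd_antisymm
    (hcop₁.dvd_of_dvd_mul_right ⟨q₂, hcross.symm⟩)
    (hcop₂.dvd_of_dvd_mul_right ⟨q₁, hcross⟩)
  subst ha
  exact ⟨rfl, (Nat.eq_of_mul_eq_mul_left ha₁ hcross).symm⟩

end FareyConsec

lemma sum_Icc_one_div_sq_le_two (n : ℕ) : ∑ k ∈ Finset.Icc 1 n, (1 : ℝ) / (k : ℝ) ^ 2 ≤ 2 := by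
  have hIoo : Finset.Ioo 0 (n + 1) = Finset.Icc 1 n := by ext; simp only [Finset.mem_Ioo, Finset.mem_Icc]; lia
  simpa [one_div, hIoo] using sum_Ioo_inv_sq_le (α := ℝ) 0 (n + 1)

lemma sum_Icc_prod_Icc_one_div_sq_mul_sq_le (Q : ℕ) :
    ∑ y ∈ Finset.Icc 1 Q ×ˢ Finset.Icc 1 Q, (1 : ℝ) / ((y.2 : ℝ) ^ 2 * (Q : ℝ) ^ 2) ≤ 2 / Q := by
  calc ∑ y ∈ Finset.Icc 1 Q ×ˢ Finset.Icc 1 Q, (1 : ℝ) / ((y.2 : ℝ) ^ 2 * (Q : ℝ) ^ 2)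
      = Q * (∑ k ∈ Finset.Icc 1 Q, (1 : ℝ) / (k : ℝ) ^ 2) / (Q : ℝ) ^ 2 := by
        simp only [Finset.sum_product, Finset.sum_const, Nat.card_Icc, nsmul_eq_mul,
          ← div_div, ← Finset.sum_div]
        push_cast
        ring
    _ ≤ Q * 2 / (Q : ℝ) ^ 2 := by gcongr; exact sum_Icc_one_div_sq_le_two Q
    _ = 2 / Q := by
        rcases Nat.eq_zero_or_pos Q with rfl | hQ
        · simp
        · field_simp

/-- The sum over all pairs of consecutive Farey fractions of order `Q`, with denominators
`q` and `q'`, of `1/(q'²(q+q')²)` is `O(1/Q)` as `Q → ∞`. -/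
theorem sum_farey_consec_inv_q'_sq_sum_sq :
    ∃ C > 0, ∀ Q : ℕ, 1 ≤ Q →
      ∑ p ∈ ((Finset.Icc 1 Q ×ˢ Finset.Icc 1 Q) ×ˢ (Finset.Icc 1 Q ×ˢ Finset.Icc 1 Q)).filter
          (fun p => FareyConsec Q p.1.1 p.1.2 p.2.1 p.2.2),
        (1 : ℝ) / ((p.2.2 : ℝ) ^ 2 * ((p.1.2 : ℝ) + (p.2.2 : ℝ)) ^ 2) ≤ C / Q := by
  refine ⟨2, two_pos, fun Q _ => ?_⟩
  set S := ((Finset.Icc 1 Q ×ˢ Finset.Icc 1 Q) ×ˢ (Finset.Icc 1 Q ×ˢ Finset.Icc 1 Q)).filter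
      (fun p => FareyConsec Q p.1.1 p.1.2 p.2.1 p.2.2)
  set g : ℕ × ℕ → ℝ := fun y => 1 / ((y.2 : ℝ) ^ 2 * (Q : ℝ) ^ 2)
  have hfarey {p} (hp : p ∈ S) : FareyConsec Q p.1.1 p.1.2 p.2.1 p.2.2 :=
    (Finset.mem_filter.mp hp).2
  have hinj : Set.InjOn Prod.snd (S : Set ((ℕ × ℕ) × ℕ × ℕ)) := fun x hx y hy hxy => by
    have hy' : FareyConsec Q y.1.1 y.1.2 x.2.1 x.2.2 := hxy ▸ hfarey hy
    obtain ⟨ha, hq⟩ := (hfarey hx).left_unique hy'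
    exact Prod.ext (Prod.ext ha hq) hxy
  have himage : S.image Prod.snd ⊆ Finset.Icc 1 Q ×ˢ Finset.Icc 1 Q := by
    intro y hy
    obtain ⟨p, hp, rfl⟩ := Finset.mem_image.mp hy
    exact (Finset.mem_product.mp (Finset.mem_filter.mp hp).1).2
  calc ∑ p ∈ S, (1 : ℝ) / ((p.2.2 : ℝ) ^ 2 * ((p.1.2 : ℝ) + (p.2.2 : ℝ)) ^ 2)
      ≤ ∑ p ∈ S, g p.2 := Finset.sum_le_sum fun p hp => by
        have hq' : (0 : ℝ) < p.2.2 := by exact_mod_cast (hfarey hp).right_den_pos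
        have hQ : (Q : ℝ) ≤ p.1.2 + p.2.2 := by exact_mod_cast (hfarey hp).lt_add.le
        simp only [g]
        gcongr
    _ = ∑ y ∈ S.image Prod.snd, g y := (Finset.sum_image hinj).symm
    _ ≤ ∑ y ∈ Finset.Icc 1 Q ×ˢ Finset.Icc 1 Q, g y :=
        Finset.sum_le_sum_of_subset_of_nonneg himage fun _ _ _ => by positivity
    _ ≤ 2 / Q := sum_Icc_prod_Icc_one_div_sq_mul_sq_le Q
end

section
/- ∫_0^1 W(x) dx = ζ(2)/2 = π²/12, where W(x) = (1/x)·log(1/max(x, 1−x)) for x ∈ (0,1]. -/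
/-!
On `[0, 1/2]` the integrand is `-log (1 - x) / x`, whose integral is the dilogarithm `Li₂(1/2)`;
on `[1/2, 1]` it is `-log x / x`, with primitive `-(log x)² / 2`, contributing `(log 2)² / 2`.
Integrating the power series of `-log (1 - t) / t` and of `-log t / (1 - t)` term by term
(legitimate since all terms are nonnegative) gives `∫_x^1 -log (1 - t) / t = ζ(2) - Li₂(x)` and
`∫_0^x -log t / (1 - t) = log x log (1 - x) + Li₂(x)`. The substitution `t ↦ 1 - t` identifies the
left-hand sides for `x` and `1 - x`, which is Euler's reflection formula
`Li₂(x) + Li₂(1 - x) = π²/6 - log x log (1 - x)`; at `x = 1/2` it gives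
`Li₂(1/2) = π²/12 - (log 2)²/2`.
-/

open Real MeasureTheory Set intervalIntegral
open scoped Interval

theorem hasSum_integral_of_nonneg {α ι : Type*} [MeasurableSpace α] {μ : Measure α} [Countable ι]
    {F : ι → α → ℝ} {f : α → ℝ} (hF_int : ∀ i, Integrable (F i) μ)
    (hF_nonneg : ∀ i, 0 ≤ᵐ[μ] F i) (hF_sum : Summable fun i ↦ ∫ a, F i a ∂μ)
    (hf : ∀ᵐ a ∂μ, HasSum (F · a) (f a)) :
    HasSum (fun i ↦ ∫ a, F i a ∂μ) (∫ a, f a ∂μ) := by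
  have h_norm (i : ι) : ∫ a, ‖F i a‖ ∂μ = ∫ a, F i a ∂μ :=
    integral_congr_ae ((hF_nonneg i).mono fun a ha ↦ Real.norm_of_nonneg ha)
  have := hasSum_integral_of_summable_integral_norm hF_int (by simpa only [h_norm] using hF_sum)
  rwa [integral_congr_ae (hf.mono fun a ha ↦ ha.tsum_eq)] at this

theorem hasSum_one_div_succ_sq : HasSum (fun n : ℕ ↦ 1 / ((n : ℝ) + 1) ^ 2) (π ^ 2 / 6) := by
  simpa using (hasSum_nat_add_iff' 1).mpr hasSum_zeta_two

theorem hasSum_pow_div_succ_neg_log_one_sub_div {x : ℝ} (hx₀ : x ≠ 0) (hx : |x| < 1) :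
    HasSum (fun n : ℕ ↦ x ^ n / (n + 1)) (-log (1 - x) / x) := by
  have h := (hasSum_pow_div_log_of_abs_lt_one hx).div_const x
  have h_terms (n : ℕ) : x ^ (n + 1) / (n + 1) / x = x ^ n / (n + 1) := by
    rw [pow_succ, mul_div_right_comm, mul_div_cancel_right₀ _ hx₀]
  simpa only [h_terms] using h

theorem neg_log_one_sub_div_le_of_le {x y : ℝ} (hx : 0 < x) (hxy : x ≤ y) (hy : y < 1) :
    -log (1 - x) / x ≤ -log (1 - y) / y :=
  hasSum_le (fun n ↦ by gcongr)
    (hasSum_pow_div_succ_neg_log_one_sub_div hx.ne' (by rw [abs_of_pos hx]; linarith))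
    (hasSum_pow_div_succ_neg_log_one_sub_div (hx.trans_le hxy).ne'
      (by rw [abs_of_pos (hx.trans_le hxy)]; exact hy))

theorem intervalIntegrable_neg_log_one_sub_div {b : ℝ} (hb₀ : 0 < b) (hb : b < 1) :
    IntervalIntegrable (fun x ↦ -log (1 - x) / x) volume 0 b := by
  rw [intervalIntegrable_iff_integrableOn_Ioc_of_le hb₀.le]
  refine IntegrableOn.of_bound measure_Ioc_lt_top
    (by fun_prop : Measurable fun x ↦ -log (1 - x) / x).aestronglyMeasurable (-log (1 - b) / b) ?_
  refine ae_restrict_of_forall_mem measurableSet_Ioc fun x ⟨hx₀, hxb⟩ ↦ ?_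
  have hx_nonneg : 0 ≤ -log (1 - x) / x :=
    div_nonneg (neg_nonneg.mpr (log_nonpos (by linarith) (by linarith))) hx₀.le
  rw [Real.norm_of_nonneg hx_nonneg]
  exact neg_log_one_sub_div_le_of_le hx₀ hxb hb

theorem hasSum_integral_neg_log_one_sub_div {a b : ℝ} (ha : 0 ≤ a) (hab : a ≤ b) (hb : b ≤ 1) :
    HasSum (fun n : ℕ ↦ (b ^ (n + 1) - a ^ (n + 1)) / ((n : ℝ) + 1) ^ 2)
      (∫ x in a..b, -log (1 - x) / x) := by
  have h_term (n : ℕ) :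
      ∫ x in Ioo a b, x ^ n / ((n : ℝ) + 1) = (b ^ (n + 1) - a ^ (n + 1)) / ((n : ℝ) + 1) ^ 2 := by
    rw [← integral_Ioc_eq_integral_Ioo, ← integral_of_le hab, intervalIntegral.integral_div,
      integral_pow, div_div, sq]
  have h_summable : Summable fun n : ℕ ↦ (b ^ (n + 1) - a ^ (n + 1)) / ((n : ℝ) + 1) ^ 2 := by
    refine hasSum_one_div_succ_sq.summable.of_nonneg_of_le (fun n ↦ ?_) (fun n ↦ ?_)
    · have : a ^ (n + 1) ≤ b ^ (n + 1) := by gcongr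
      exact div_nonneg (by linarith) (by positivity)
    · have : b ^ (n + 1) ≤ 1 := pow_le_one₀ (ha.trans hab) hb
      have : 0 ≤ a ^ (n + 1) := by positivity
      gcongr
      linarith
  -- On the open interval the series converges pointwise even when `a = 0` or `b = 1`.
  rw [integral_of_le hab, integral_Ioc_eq_integral_Ioo]
  simp only [← h_term] at h_summable ⊢
  refine hasSum_integral_of_nonneg (fun n ↦ (by fun_prop : Continuous _).integrableOn_Icc.mono_set
    Ioo_subset_Icc_self) (fun n ↦ ?_) h_summable ?_
  · exact ae_restrict_of_forall_mem measurableSet_Ioo fun x hx ↦ by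
      have := ha.trans_lt hx.1
      positivity
  · refine ae_restrict_of_forall_mem measurableSet_Ioo fun x ⟨hax, hxb⟩ ↦ ?_
    have hx₀ : 0 < x := ha.trans_lt hax
    exact hasSum_pow_div_succ_neg_log_one_sub_div hx₀.ne' (by rw [abs_of_pos hx₀]; linarith)

theorem integral_pow_mul_log (n : ℕ) {b : ℝ} (hb : 0 ≤ b) :
    ∫ x in 0..b, x ^ n * log x
      = b ^ (n + 1) * log b / (n + 1) - b ^ (n + 1) / ((n : ℝ) + 1) ^ 2 := by
  set G : ℝ → ℝ := fun x ↦ x ^ (n + 1) * log x / (n + 1) - x ^ (n + 1) / ((n : ℝ) + 1) ^ 2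
  have hG_cont : Continuous G := by
    simp only [G, pow_succ, mul_assoc]
    fun_prop [continuous_mul_log]
  have hG_deriv (x : ℝ) (hx : x ≠ 0) : HasDerivAt G (x ^ n * log x) x := by
    have h := (((hasDerivAt_pow (n + 1) x).mul (hasDerivAt_log hx)).div_const ((n : ℝ) + 1)).sub
      ((hasDerivAt_pow (n + 1) x).div_const (((n : ℝ) + 1) ^ 2))
    refine h.congr_deriv ?_
    rw [Nat.add_sub_cancel]
    push_cast
    field_simp
    ring
  rw [integral_eq_sub_of_hasDerivAt_of_le hb hG_cont.continuousOn
    (fun x hx ↦ hG_deriv x hx.1.ne') (intervalIntegrable_log'.continuousOn_mul (by fun_prop))]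
  simp [G]

-- This is `Li₂ x` only for `x ≤ 1`; beyond that, `log (1 - t)` silently means `log |1 - t|`.
noncomputable def dilog (x : ℝ) : ℝ := ∫ t in 0..x, -log (1 - t) / t

theorem hasSum_dilog {x : ℝ} (hx₀ : 0 ≤ x) (hx₁ : x ≤ 1) :
    HasSum (fun n : ℕ ↦ x ^ (n + 1) / ((n : ℝ) + 1) ^ 2) (dilog x) := by
  simpa only [zero_pow (Nat.succ_ne_zero _), sub_zero, dilog] using
    hasSum_integral_neg_log_one_sub_div le_rfl hx₀ hx₁

theorem integral_neg_log_one_sub_div_eq_sub_dilog {x : ℝ} (hx₀ : 0 ≤ x) (hx₁ : x ≤ 1) :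
    ∫ t in x..1, -log (1 - t) / t = π ^ 2 / 6 - dilog x := by
  refine (hasSum_integral_neg_log_one_sub_div hx₀ hx₁ le_rfl).unique ?_
  simpa only [one_pow, ← sub_div] using hasSum_one_div_succ_sq.sub (hasSum_dilog hx₀ hx₁)

theorem integral_neg_log_div_one_sub {x : ℝ} (hx₀ : 0 < x) (hx₁ : x < 1) :
    ∫ t in 0..x, -log t / (1 - t) = log x * log (1 - x) + dilog x := by
  have h_term (n : ℕ) : ∫ t in Ioc 0 x, t ^ n * -log t
      = x ^ (n + 1) / (n + 1) * -log x + x ^ (n + 1) / ((n : ℝ) + 1) ^ 2 := by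
    rw [← integral_of_le hx₀.le]
    simp only [mul_neg, intervalIntegral.integral_neg, integral_pow_mul_log n hx₀.le]
    ring
  have h_sum : HasSum (fun n : ℕ ↦ x ^ (n + 1) / (n + 1) * -log x + x ^ (n + 1) / ((n : ℝ) + 1) ^ 2)
      (log x * log (1 - x) + dilog x) := by
    have h_log := (hasSum_pow_div_log_of_abs_lt_one (by rw [abs_of_pos hx₀]; exact hx₁)).mul_right
      (-log x)
    rw [show log x * log (1 - x) = -log (1 - x) * -log x by ring]
    exact h_log.add (hasSum_dilog hx₀.le hx₁.le)
  rw [integral_of_le hx₀.le]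
  refine (hasSum_integral_of_nonneg (F := fun n t ↦ t ^ n * -log t) (fun n ↦ ?_) (fun n ↦ ?_)
    (by simpa only [h_term] using h_sum.summable) ?_).unique (by simpa only [h_term] using h_sum)
  · exact (intervalIntegrable_iff_integrableOn_Ioc_of_le hx₀.le).mp
      (intervalIntegrable_log'.neg.continuousOn_mul (continuousOn_pow n))
  · exact ae_restrict_of_forall_mem measurableSet_Ioc fun t ⟨ht₀, htx⟩ ↦
      mul_nonneg (pow_nonneg ht₀.le n) (neg_nonneg.mpr (log_nonpos ht₀.le (by linarith)))
  · refine ae_restrict_of_forall_mem measurableSet_Ioc fun t ⟨ht₀, htx⟩ ↦ ?_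
    have h := (hasSum_geometric_of_lt_one ht₀.le (by linarith)).mul_right (-log t)
    rwa [inv_mul_eq_div] at h

theorem dilog_add_dilog_one_sub {x : ℝ} (hx₀ : 0 < x) (hx₁ : x < 1) :
    dilog x + dilog (1 - x) = π ^ 2 / 6 - log x * log (1 - x) := by
  have h_reflect : ∫ t in x..1, -log (1 - t) / t = ∫ t in 0..1 - x, -log t / (1 - t) := by
    simpa using integral_comp_sub_left (fun t ↦ -log t / (1 - t)) 1 (a := x) (b := 1)
  have h := integral_neg_log_div_one_sub (x := 1 - x) (by linarith) (by linarith)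
  rw [sub_sub_cancel, ← h_reflect, integral_neg_log_one_sub_div_eq_sub_dilog hx₀.le hx₁.le] at h
  linarith

theorem dilog_one_half : dilog (1 / 2) = π ^ 2 / 12 - log 2 ^ 2 / 2 := by
  have h := dilog_add_dilog_one_sub (x := 1 / 2) (by norm_num) (by norm_num)
  rw [show (1 : ℝ) - 1 / 2 = 1 / 2 by norm_num, one_div, log_inv] at h
  linarith

theorem intervalIntegrable_log_div_self {a b : ℝ} (h : (0 : ℝ) ∉ [[a, b]]) :
    IntervalIntegrable (fun t ↦ log t / t) volume a b :=
  ContinuousOn.intervalIntegrable <| (continuousOn_log.div continuousOn_id fun _ ht ↦ ht).mono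
    fun t ht (ht₀ : t = 0) ↦ h (ht₀ ▸ ht)

theorem integral_log_div_self {a b : ℝ} (h : (0 : ℝ) ∉ [[a, b]]) :
    ∫ t in a..b, log t / t = (log b ^ 2 - log a ^ 2) / 2 := by
  have h_deriv (t : ℝ) (ht : t ∈ [[a, b]]) : HasDerivAt (fun t ↦ log t ^ 2 / 2) (log t / t) t := by
    have ht₀ : t ≠ 0 := fun ht₀ ↦ h (ht₀ ▸ ht)
    refine (((hasDerivAt_log ht₀).pow 2).div_const 2).congr_deriv ?_
    field_simp
    norm_num
  rw [integral_eq_sub_of_hasDerivAt h_deriv (intervalIntegrable_log_div_self h)]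
  ring

/-- `∫_0^1 W(x) dx = ζ(2)/2 = π²/12`, where `W(x) = (1/x) log(1/max(x, 1−x))`. -/
theorem integral_W_eq :
    ∫ x in (0:ℝ)..1, -Real.log (max x (1 - x)) / x = Real.pi ^ 2 / 12 := by
  have h_not_mem : (0 : ℝ) ∉ [[1 / 2, 1]] := by norm_num [uIcc_of_le]
  have h_left : EqOn (fun x ↦ -log (max x (1 - x)) / x) (fun x ↦ -log (1 - x) / x)
      [[0, 1 / 2]] := by
    intro x hx
    rw [uIcc_of_le (by norm_num)] at hx
    simp only [max_eq_right (by linarith [hx.2] : x ≤ 1 - x)]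
  have h_right : EqOn (fun x ↦ -log (max x (1 - x)) / x) (fun x ↦ -(log x / x)) [[1 / 2, 1]] := by
    intro x hx
    rw [uIcc_of_le (by norm_num)] at hx
    simp only [max_eq_left (by linarith [hx.1] : 1 - x ≤ x), neg_div]
  have h_int_left := (intervalIntegrable_congr (h_left.mono uIoc_subset_uIcc)).mpr
    (intervalIntegrable_neg_log_one_sub_div (b := 1 / 2) (by norm_num) (by norm_num))
  have h_int_right := (intervalIntegrable_congr (h_right.mono uIoc_subset_uIcc)).mpr
    (intervalIntegrable_log_div_self h_not_mem).neg
  rw [← integral_add_adjacent_intervals h_int_left h_int_right, integral_congr h_left,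
    integral_congr h_right, ← dilog, dilog_one_half, intervalIntegral.integral_neg,
    integral_log_div_self h_not_mem, log_one, one_div, log_inv]
  ring
end

section
/- ∫_1^∞ (2/t + 2(1 − 1/t)² log(1 − 1/t)) · log t dt = 2(2ζ(3) − 1). -/
/-!
Substituting `u = 1 / t`, the weight `2 u + 2 (1 - u)² log (1 - u)` is the power series
`∑ cₙ u^(n+2)` with `c₀ = 3` and `cₙ = -4 / (n (n + 1) (n + 2))` for `n ≥ 1`. Integrating termwise
against `log t`, using `∫₁^∞ t^(-s) log t dt = 1 / (s - 1)²`, leaves `∑ cₙ / (n + 1)²`; the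
partial fraction `1 / ((m - 1) m³ (m + 1)) = 1 / ((m - 1) m (m + 1)) - 1 / m³` splits this into a
telescoping series and `ζ(3)`. The interchange is legitimate because the integrands `t^(-s) log t`
are nonnegative and the real series `∑ cₙ / (n + 1)²` converges absolutely.
-/

open MeasureTheory Real Set Filter Topology

section RpowLog

variable {s : ℝ}

lemma hasDerivAt_rpow_one_sub_mul_log (hs : s ≠ 1) {t : ℝ} (ht : 0 < t) :
    HasDerivAt (fun x => -(x ^ (1 - s) * ((s - 1) * log x + 1)) / (s - 1) ^ 2)
      (t ^ (-s) * log t) t := by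
  have hpow := hasDerivAt_rpow_const (p := 1 - s) (Or.inl ht.ne')
  have hlog := ((hasDerivAt_log ht.ne').const_mul (s - 1)).add_const 1
  refine ((hpow.mul hlog).neg.div_const ((s - 1) ^ 2)).congr_deriv ?_
  rw [show 1 - s - 1 = -s by ring, show 1 - s = -s + 1 by ring, rpow_add ht, rpow_one]
  field_simp [sub_ne_zero.2 hs]
  ring

lemma tendsto_rpow_one_sub_mul_log_atTop (hs : 1 < s) :
    Tendsto (fun x => -(x ^ (1 - s) * ((s - 1) * log x + 1)) / (s - 1) ^ 2) atTop (𝓝 0) := by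
  have hr : 0 < s - 1 := sub_pos.2 hs
  have hpow : Tendsto (fun x : ℝ => x ^ (1 - s)) atTop (𝓝 0) := by
    simpa using tendsto_rpow_neg_atTop hr
  have hlog : Tendsto (fun x => x ^ (1 - s) * log x) atTop (𝓝 0) := by
    refine (isLittleO_log_rpow_atTop hr).tendsto_div_nhds_zero.congr' ?_
    filter_upwards [eventually_gt_atTop 0] with x hx
    rw [show 1 - s = -(s - 1) by ring, rpow_neg hx.le, div_eq_inv_mul]
  simpa [mul_add, mul_left_comm] using ((hlog.const_mul (s - 1)).add hpow).neg.div_const _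

lemma rpow_neg_mul_log_nonneg {t : ℝ} (ht : t ∈ Ioi 1) : 0 ≤ t ^ (-s) * log t :=
  mul_nonneg (rpow_nonneg (by linarith [ht.out]) _) (log_nonneg ht.out.le)

lemma integrableOn_rpow_neg_mul_log_Ioi_one (hs : 1 < s) :
    IntegrableOn (fun t => t ^ (-s) * log t) (Ioi 1) :=
  integrableOn_Ioi_deriv_of_nonneg'
    (fun _ ht => hasDerivAt_rpow_one_sub_mul_log hs.ne' (zero_lt_one.trans_le ht))
    (fun _ => rpow_neg_mul_log_nonneg) (tendsto_rpow_one_sub_mul_log_atTop hs)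

lemma integral_rpow_neg_mul_log_Ioi_one (hs : 1 < s) :
    ∫ t in Ioi 1, t ^ (-s) * log t = 1 / (s - 1) ^ 2 := by
  rw [integral_Ioi_of_hasDerivAt_of_nonneg'
    (fun _ ht => hasDerivAt_rpow_one_sub_mul_log hs.ne' (zero_lt_one.trans_le ht))
    (fun _ => rpow_neg_mul_log_nonneg) (tendsto_rpow_one_sub_mul_log_atTop hs)]
  simp [neg_div]

end RpowLog

lemma hasSum_sub_succ_of_tendsto_zero {f : ℕ → ℝ} (hmono : ∀ n, f (n + 1) ≤ f n)
    (hf : Tendsto f atTop (𝓝 0)) : HasSum (fun n => f n - f (n + 1)) (f 0) := by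
  rw [hasSum_iff_tendsto_nat_of_nonneg (fun n => sub_nonneg.2 (hmono n))]
  simp_rw [Finset.sum_range_sub']
  simpa using (tendsto_const_nhds (x := f 0)).sub hf

lemma hasSum_one_div_succ_mul_add_two_mul_add_three :
    HasSum (fun n : ℕ => 1 / (((n : ℝ) + 1) * (n + 2) * (n + 3))) (1 / 4) := by
  set f : ℕ → ℝ := fun n => 1 / (2 * ((n : ℝ) + 1) * (n + 2))
  have hterm (n : ℕ) : f n - f (n + 1) = 1 / (((n : ℝ) + 1) * (n + 2) * (n + 3)) := by
    simp only [f]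
    push_cast
    field_simp
    ring
  have hf : Tendsto f atTop (𝓝 0) := by
    refine squeeze_zero (fun n => by positivity) (fun n => ?_)
      tendsto_one_div_add_atTop_nhds_zero_nat
    rw [div_le_div_iff₀ (by positivity) (by positivity)]
    nlinarith
  have hmono (n : ℕ) : f (n + 1) ≤ f n := by
    rw [← sub_nonneg, hterm]
    positivity
  rw [show (1 : ℝ) / 4 = f 0 by norm_num [f]]
  exact (hasSum_sub_succ_of_tendsto_zero hmono hf).congr_fun fun n => (hterm n).symm

/-- The coefficient of `u ^ (n + 2)` in `2 u + 2 (1 - u)² log (1 - u)`; for `n = 0` the junk value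
`1 / 0 = 0` makes the formula give the correct coefficient `3`. -/
noncomputable def logWeightCoeff (n : ℕ) : ℝ := 2 * (2 / (n + 1) - 1 / (n + 2) - 1 / n)

lemma hasSum_logWeightCoeff_mul_pow {u : ℝ} (hu : |u| < 1) :
    HasSum (fun n => logWeightCoeff n * u ^ (n + 2)) (2 * u + 2 * (1 - u) ^ 2 * log (1 - u)) := by
  -- `g 0 = 0` lets the three shifted logarithm series match `logWeightCoeff` termwise.
  set g : ℕ → ℝ := fun n => u ^ n / n
  have h1 : HasSum (fun n => g (n + 1)) (-log (1 - u)) := by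
    simpa [g] using hasSum_pow_div_log_of_abs_lt_one hu
  have h0 : HasSum g (-log (1 - u)) := by
    simpa [g] using (hasSum_nat_add_iff 1).1 h1
  have h2 : HasSum (fun n => g (n + 2)) (-log (1 - u) - u) := by
    simpa [g, add_assoc, one_add_one_eq_two] using (hasSum_nat_add_iff' 1).2 h1
  rw [show 2 * u + 2 * (1 - u) ^ 2 * log (1 - u)
    = -2 * (-log (1 - u) - u) + 4 * u * -log (1 - u) + -2 * u ^ 2 * -log (1 - u) by ring]
  refine ((h2.mul_left (-2)).add (h1.mul_left (4 * u))).add (h0.mul_left (-2 * u ^ 2))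
    |>.congr_fun fun n => ?_
  simp only [logWeightCoeff, g]
  push_cast
  ring

lemma mul_log_eq_tsum_logWeightCoeff {t : ℝ} (ht : t ∈ Ioi 1) :
    (2 / t + 2 * (1 - 1 / t) ^ 2 * log (1 - 1 / t)) * log t
      = ∑' n : ℕ, logWeightCoeff n * (t ^ (-((n : ℝ) + 2)) * log t) := by
  have ht0 : 0 < t := zero_lt_one.trans ht
  have hu : |1 / t| < 1 := by
    rw [abs_of_pos (by positivity), div_lt_one ht0]
    exact ht
  have hpow (n : ℕ) : t ^ (-((n : ℝ) + 2)) = (1 / t) ^ (n + 2) := by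
    rw [rpow_neg ht0.le, one_div, inv_pow, ← rpow_natCast]
    norm_cast
  simp_rw [hpow, ← mul_assoc, tsum_mul_right, (hasSum_logWeightCoeff_mul_pow hu).tsum_eq]
  ring

lemma hasSum_logWeightCoeff_div_sq {Z : ℝ} (hZ : HasSum (fun n : ℕ => 1 / ((n : ℝ) + 1) ^ 3) Z) :
    HasSum (fun n => logWeightCoeff n / ((n : ℝ) + 1) ^ 2) (4 * Z - 2) := by
  have hZ' : HasSum (fun n : ℕ => 1 / ((n : ℝ) + 2) ^ 3) (Z - 1) := by
    simpa [add_assoc, one_add_one_eq_two] using (hasSum_nat_add_iff' 1).2 hZ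
  refine (hasSum_nat_add_iff' 1).1 ?_
  rw [show 4 * Z - 2 - ∑ i ∈ Finset.range 1, logWeightCoeff i / ((i : ℝ) + 1) ^ 2
    = -4 * (1 / 4 - (Z - 1)) by norm_num [logWeightCoeff]; ring]
  refine (hasSum_one_div_succ_mul_add_two_mul_add_three.sub hZ').mul_left (-4)
    |>.congr_fun fun n => ?_
  simp only [logWeightCoeff]
  push_cast
  field_simp
  ring

lemma integral_tsum_mul_of_nonneg {α : Type*} [MeasurableSpace α] {μ : Measure α} {c : ℕ → ℝ}
    {g : ℕ → α → ℝ} (hg : ∀ n, 0 ≤ᵐ[μ] g n) (hint : ∀ n, Integrable (g n) μ)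
    (hs : Summable fun n => c n * ∫ x, g n x ∂μ) :
    ∫ x, ∑' n, c n * g n x ∂μ = ∑' n, c n * ∫ x, g n x ∂μ := by
  have hnorm (n : ℕ) : ∫ x, ‖c n * g n x‖ ∂μ = |c n * ∫ x, g n x ∂μ| := by
    rw [abs_mul, abs_of_nonneg (integral_nonneg_of_ae (hg n)), ← integral_const_mul]
    refine integral_congr_ae ((hg n).mono fun x hx => ?_)
    simp only [norm_mul, norm_of_nonneg hx, norm_eq_abs]
  simp_rw [← integral_const_mul]
  exact (integral_tsum_of_summable_integral_norm (fun n => (hint n).const_mul (c n))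
    (by simpa only [hnorm] using hs.abs)).symm

/-- `∫_1^∞ (2/t + 2(1 − 1/t)² log(1 − 1/t)) log t dt = 2(2ζ(3) − 1)`. -/
theorem integral_log_weight :
    ∫ t in Set.Ioi (1:ℝ),
        (2 / t + 2 * (1 - 1 / t) ^ 2 * Real.log (1 - 1 / t)) * Real.log t
      = 2 * (2 * (∑' n : ℕ, (1 : ℝ) / ((n : ℝ) + 1) ^ 3) - 1) := by
  have hZ : HasSum (fun n : ℕ => 1 / ((n : ℝ) + 1) ^ 3) (∑' n : ℕ, 1 / ((n : ℝ) + 1) ^ 3) := by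
    refine Summable.hasSum ?_
    simpa using (summable_nat_add_iff 1).2 (summable_one_div_nat_pow.2 (by norm_num : 1 < 3))
  have hexp (n : ℕ) : 1 < (n : ℝ) + 2 := by linarith [n.cast_nonneg (α := ℝ)]
  have hint (n : ℕ) : ∫ t in Ioi 1, t ^ (-((n : ℝ) + 2)) * log t = 1 / ((n : ℝ) + 1) ^ 2 := by
    rw [integral_rpow_neg_mul_log_Ioi_one (hexp n)]
    ring
  have hcoeff := hasSum_logWeightCoeff_div_sq hZ
  simp_rw [div_eq_mul_one_div (logWeightCoeff _), ← hint] at hcoeff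
  rw [setIntegral_congr_fun measurableSet_Ioi fun _ => mul_log_eq_tsum_logWeightCoeff,
    integral_tsum_mul_of_nonneg (g := fun n t => t ^ (-((n : ℝ) + 2)) * log t)
      (fun _ => ae_restrict_of_forall_mem measurableSet_Ioi fun _ => rpow_neg_mul_log_nonneg)
      (fun n => integrableOn_rpow_neg_mul_log_Ioi_one (hexp n)) hcoeff.summable,
    hcoeff.tsum_eq]
  ring
end
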